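/- Let U, Y¹, Y² be independent random objects on a probability space, where U is uniformly distributed on [0,1] and Y¹, Y² are identically distributed D-valued random processes (each Y^i(t) is measurable and the paths t ↦ Y^i(t) are cadlag) with E[‖Y¹‖_∞²] < ∞. Define the process Z(t) = 1_{t<U}·U·Y¹(t/U) + 1_{t≥U}·(1−U)·Y²((t−U)/(1−U)) for t ∈ [0,1]. Then E[‖Z‖_∞²] ≤ (2/3)·E[‖Y¹‖_∞²]. -/
import Mathlib


open MeasureTheory ProbabilityTheory Filter Finset

noncomputable section

/-- A function `f : ℝ → ℝ` is cadlag on `[0,1]` if it is right-continuous at every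
`t ∈ [0,1)` and has a left limit at every `t ∈ (0,1]` (limits taken within `[0,1]`). -/
def Cadlag (f : ℝ → ℝ) : Prop :=
  (∀ t ∈ Set.Ico (0:ℝ) 1, Filter.Tendsto f (nhdsWithin t (Set.Ioc t 1)) (nhds (f t))) ∧
  (∀ t ∈ Set.Ioc (0:ℝ) 1, ∃ L : ℝ, Filter.Tendsto f (nhdsWithin t (Set.Ico 0 t)) (nhds L))

/-- a cadlag function is bounded on [0,1] -/
lemma cadlag_bdd {f : ℝ → ℝ} (hf : Cadlag f) :
    ∃ C : ℝ, ∀ t ∈ Set.Icc (0:ℝ) 1, |f t| ≤ C := by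
  -- local boundedness
  have hloc : ∀ x : Set.Icc (0:ℝ) 1, ∃ C : ℝ,
      ∀ᶠ y in nhds (x:ℝ), y ∈ Set.Icc (0:ℝ) 1 → |f y| ≤ C := by
    rintro ⟨x, hx⟩
    have hright : ∃ Cr : ℝ, ∀ᶠ y in nhds x, y ∈ Set.Ioc x 1 → |f y| ≤ Cr := by
      by_cases hx1 : x < 1
      · have h := (hf.1 x ⟨hx.1, hx1⟩).abs
        have h2 : ∀ᶠ y in nhdsWithin x (Set.Ioc x 1), |f y| ≤ |f x| + 1 :=
          h.eventually (eventually_le_nhds (lt_add_one |f x|))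
        rw [eventually_nhdsWithin_iff] at h2
        exact ⟨|f x| + 1, h2⟩
      · refine ⟨0, Eventually.of_forall fun y hy => absurd hy ?_⟩
        have hx' : x = 1 := le_antisymm hx.2 (not_lt.1 hx1)
        subst hx'
        intro h; exact absurd h.2 (not_le.2 h.1)
    have hleft : ∃ Cl : ℝ, ∀ᶠ y in nhds x, y ∈ Set.Ico 0 x → |f y| ≤ Cl := by
      by_cases hx0 : 0 < x
      · obtain ⟨L, hL⟩ := hf.2 x ⟨hx0, hx.2⟩
        have h2 : ∀ᶠ y in nhdsWithin x (Set.Ico 0 x), |f y| ≤ |L| + 1 :=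
          hL.abs.eventually (eventually_le_nhds (lt_add_one |L|))
        rw [eventually_nhdsWithin_iff] at h2
        exact ⟨|L| + 1, h2⟩
      · refine ⟨0, Eventually.of_forall fun y hy => absurd hy ?_⟩
        have hx' : x = 0 := le_antisymm (not_lt.1 hx0) hx.1
        subst hx'
        intro h; exact absurd h.2 (not_lt.2 h.1)
    obtain ⟨Cr, hCr⟩ := hright
    obtain ⟨Cl, hCl⟩ := hleft
    refine ⟨max (|f x|) (max Cr Cl), ?_⟩
    filter_upwards [hCr, hCl] with y h1 h2 hy
    rcases lt_trichotomy y x with h | h | h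
    · exact le_trans (h2 ⟨hy.1, h⟩) (le_max_of_le_right (le_max_right _ _))
    · subst h; exact le_max_left _ _
    · exact le_trans (h1 ⟨h, hy.2⟩) (le_max_of_le_right (le_max_left _ _))
  choose C hC using hloc
  have hV : ∀ x : Set.Icc (0:ℝ) 1, ∃ V : Set ℝ, IsOpen V ∧ (x:ℝ) ∈ V ∧
      ∀ y ∈ V ∩ Set.Icc (0:ℝ) 1, |f y| ≤ C x := by
    intro x
    obtain ⟨V, hVsub, hVopen, hxV⟩ := mem_nhds_iff.1 (hC x)
    exact ⟨V, hVopen, hxV, fun y hy => hVsub hy.1 hy.2⟩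
  choose V hVopen hxV hVle using hV
  obtain ⟨s, hs⟩ := isCompact_Icc.elim_nhds_subcover'
    (fun x hx => V ⟨x, hx⟩) (fun x hx => (hVopen ⟨x, hx⟩).mem_nhds (hxV ⟨x, hx⟩))
  obtain ⟨B, hB⟩ := (s.finite_toSet.image fun x => C x).bddAbove
  refine ⟨B, fun t ht => ?_⟩
  obtain ⟨x, hxs, htx⟩ := Set.mem_iUnion₂.1 (hs ht)
  have hx' : (⟨(x:ℝ), x.2⟩ : Set.Icc (0:ℝ) 1) = x := rfl
  rw [hx'] at htx
  exact le_trans (hVle x t ⟨htx, ht⟩)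
    (hB (Set.mem_image_of_mem _ (by exact_mod_cast hxs)))
/-- a countable dense-enough sequence in [0,1] containing 1 and all rationals of [0,1] -/
def ratSeq : ℕ → ℚ := (exists_surjective_nat ℚ).choose

lemma ratSeq_surj : Function.Surjective ratSeq := (exists_surjective_nat ℚ).choose_spec

def seqe : ℕ → ℝ := fun n =>
  match n with
  | 0 => 1
  | n + 1 => max 0 (min 1 ((ratSeq n : ℚ) : ℝ))

lemma seqe_mem (n : ℕ) : seqe n ∈ Set.Icc (0:ℝ) 1 := by
  cases n with
  | zero => exact ⟨zero_le_one, le_refl 1⟩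
  | succ n =>
    constructor
    · exact le_max_left _ _
    · exact max_le zero_le_one (min_le_left _ _)

lemma seqe_rat (q : ℚ) (hq : (q:ℝ) ∈ Set.Icc (0:ℝ) 1) : ∃ n, seqe n = (q:ℝ) := by
  obtain ⟨m, hm⟩ := ratSeq_surj q
  refine ⟨m + 1, ?_⟩
  show max 0 (min 1 ((ratSeq m : ℚ) : ℝ)) = (q:ℝ)
  rw [hm, min_eq_right hq.2, max_eq_right hq.1]

/-- for cadlag f, the sup of |f| over [0,1] equals the countable sup over seqe -/
lemma cadlag_iSup_eq {f : ℝ → ℝ} (hf : Cadlag f) :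
    (⨆ t : Set.Icc (0:ℝ) 1, |f t|) = ⨆ n, |f (seqe n)| := by
  obtain ⟨C, hC⟩ := cadlag_bdd hf
  have hbddI : BddAbove (Set.range fun t : Set.Icc (0:ℝ) 1 => |f t|) :=
    ⟨C, by rintro _ ⟨t, rfl⟩; exact hC t t.2⟩
  have hbddN : BddAbove (Set.range fun n => |f (seqe n)|) :=
    ⟨C, by rintro _ ⟨n, rfl⟩; exact hC _ (seqe_mem n)⟩
  apply le_antisymm
  · apply Real.iSup_le
    · rintro ⟨t, ht⟩
      -- |f t| ≤ ⨆ n, |f (seqe n)|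
      by_cases ht1 : t < 1
      · -- right continuity: approach along rationals from the right
        have hne : (nhdsWithin t (Set.Ioc t 1 ∩ Set.range seqe)).NeBot := by
          apply mem_closure_iff_nhdsWithin_neBot.1
          rw [Metric.mem_closure_iff]
          intro ε hε
          obtain ⟨q, hq1, hq2⟩ := exists_rat_btwn (show t < min 1 (t + ε) by
            exact lt_min ht1 (by linarith))
          have hq0 : (0:ℝ) ≤ q := le_trans ht.1 hq1.le
          have hq1' : (q:ℝ) ≤ 1 := le_of_lt (lt_of_lt_of_le hq2 (min_le_left _ _))
          obtain ⟨n, hn⟩ := seqe_rat q ⟨hq0, hq1'⟩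
          refine ⟨(q:ℝ), ⟨⟨hq1, hq1'⟩, ⟨n, hn⟩⟩, ?_⟩
          rw [Real.dist_eq, abs_sub_comm, abs_of_nonneg (by linarith)]
          have := lt_of_lt_of_le hq2 (min_le_right _ _)
          linarith
        have htend : Filter.Tendsto (fun y => |f y|)
            (nhdsWithin t (Set.Ioc t 1 ∩ Set.range seqe)) (nhds |f t|) :=
          ((hf.1 t ⟨ht.1, ht1⟩).mono_left
            (nhdsWithin_mono t Set.inter_subset_left)).abs
        refine le_of_tendsto htend ?_
        filter_upwards [self_mem_nhdsWithin] with y hy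
        obtain ⟨n, hn⟩ := hy.2
        rw [← hn]
        exact le_ciSup hbddN n
      · have ht' : t = 1 := le_antisymm ht.2 (not_lt.1 ht1)
        have h1 : seqe 0 = t := by rw [ht']; rfl
        calc |f t| = |f (seqe 0)| := by rw [h1]
          _ ≤ _ := le_ciSup hbddN 0
    · refine le_ciSup_of_le hbddN 0 (abs_nonneg _)
  · apply ciSup_le
    intro n
    exact le_ciSup_of_le hbddI ⟨seqe n, seqe_mem n⟩ le_rfl
lemma ofReal_iSup_nat {a : ℕ → ℝ} (ha : ∀ n, 0 ≤ a n) (hb : BddAbove (Set.range a)) :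
    ENNReal.ofReal (⨆ n, a n) = ⨆ n, ENNReal.ofReal (a n) := by
  apply le_antisymm
  · set s := ⨆ n, ENNReal.ofReal (a n) with hs
    by_cases htop : s = ⊤
    · rw [htop]; exact le_top
    · have h1 : ∀ n, a n ≤ s.toReal := by
        intro n
        calc a n = (ENNReal.ofReal (a n)).toReal := (ENNReal.toReal_ofReal (ha n)).symm
          _ ≤ s.toReal := ENNReal.toReal_mono htop (le_iSup (fun n => ENNReal.ofReal (a n)) n)
      calc ENNReal.ofReal (⨆ n, a n) ≤ ENNReal.ofReal s.toReal :=
            ENNReal.ofReal_le_ofReal (Real.iSup_le h1 ENNReal.toReal_nonneg)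
        _ = s := ENNReal.ofReal_toReal htop
  · exact iSup_le fun n => ENNReal.ofReal_le_ofReal (le_ciSup hb n)

/-- transfer the statement's sup to the countable ENNReal sup -/
lemma cadlag_ofReal_sq {f : ℝ → ℝ} (hf : Cadlag f) :
    ENNReal.ofReal ((⨆ t : Set.Icc (0:ℝ) 1, |f t|) ^ 2)
      = (⨆ n, ENNReal.ofReal |f (seqe n)|) ^ 2 := by
  obtain ⟨C, hC⟩ := cadlag_bdd hf
  have hb : BddAbove (Set.range fun n => |f (seqe n)|) :=
    ⟨C, by rintro _ ⟨n, rfl⟩; exact hC _ (seqe_mem n)⟩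
  have h0 : 0 ≤ ⨆ n, |f (seqe n)| := Real.iSup_nonneg fun n => abs_nonneg _
  rw [cadlag_iSup_eq hf, ENNReal.ofReal_pow h0, ofReal_iSup_nat (fun n => abs_nonneg _) hb]

/-- Let `U, Y¹, Y²` be independent, `U` uniform on `[0,1]`, `Y¹, Y²`
identically distributed `D`-valued processes with `E[‖Y¹‖_∞²] < ∞`. For
`Z(t) = 1_{t<U}·U·Y¹(t/U) + 1_{t≥U}·(1−U)·Y²((t−U)/(1−U))` one has
`E[‖Z‖_∞²] ≤ (2/3)·E[‖Y¹‖_∞²]`. -/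
theorem contraction_step {Ω : Type*} [MeasurableSpace Ω] (P : Measure Ω)
    [IsProbabilityMeasure P] (U : Ω → ℝ) (Y1 Y2 : Ω → ℝ → ℝ)
    (hU : Measure.map U P = volume.restrict (Set.Icc (0 : ℝ) 1))
    (hmeas1 : ∀ t : ℝ, Measurable fun ω => Y1 ω t)
    (hmeas2 : ∀ t : ℝ, Measurable fun ω => Y2 ω t)
    (hpath1 : ∀ ω, Cadlag (Y1 ω)) (hpath2 : ∀ ω, Cadlag (Y2 ω))
    (hident : ProbabilityTheory.IdentDistrib Y1 Y2 P P)
    (hindep : ProbabilityTheory.iIndep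
      ![MeasurableSpace.comap U (borel ℝ),
        MeasurableSpace.comap Y1 MeasurableSpace.pi,
        MeasurableSpace.comap Y2 MeasurableSpace.pi] P)
    (hL2 : (∫⁻ ω, ENNReal.ofReal ((⨆ t : Set.Icc (0:ℝ) 1, |Y1 ω t|) ^ 2) ∂P) < ⊤) :
    (∫⁻ ω, ENNReal.ofReal
        ((⨆ t : Set.Icc (0:ℝ) 1,
          |if (t : ℝ) < U ω then U ω * Y1 ω (t / U ω)
            else (1 - U ω) * Y2 ω (((t : ℝ) - U ω) / (1 - U ω))|) ^ 2) ∂P)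
      ≤ ENNReal.ofReal (2 / 3)
        * ∫⁻ ω, ENNReal.ofReal ((⨆ t : Set.Icc (0:ℝ) 1, |Y1 ω t|) ^ 2) ∂P := by
  haveI : Nonempty (Set.Icc (0:ℝ) 1) := ⟨⟨0, by norm_num⟩⟩
  -- measurability of the functionals
  set Ψ : (ℝ → ℝ) → ENNReal := fun f => (⨆ n, ENNReal.ofReal |f (seqe n)|) ^ 2 with hΨ
  have hΨmeas : Measurable Ψ :=
    (Measurable.iSup fun n => ((measurable_pi_apply (seqe n)).abs).ennreal_ofReal).pow_const 2
  set φ : ℝ → ENNReal := fun x => ENNReal.ofReal (x ^ 2) with hφ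
  set φ' : ℝ → ENNReal := fun x => ENNReal.ofReal ((1 - x) ^ 2) with hφ'
  have hφmeas : Measurable φ := (measurable_id.pow_const 2).ennreal_ofReal
  have hφ'meas : Measurable φ' :=
    ((measurable_const.sub measurable_id).pow_const 2).ennreal_ofReal
  have hY1meas : Measurable Y1 := measurable_pi_lambda _ hmeas1
  have hY2meas : Measurable Y2 := measurable_pi_lambda _ hmeas2
  -- U is a.e.-measurable and a.e. in [0,1]
  have hUae : AEMeasurable U P := by
    by_contra h
    rw [Measure.map_of_not_aemeasurable h] at hU
    have h1 := congrArg (fun μ : Measure ℝ => μ Set.univ) hU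
    simp [Measure.restrict_apply, Real.volume_Icc] at h1
  have hUmem : ∀ᵐ ω ∂P, U ω ∈ Set.Icc (0:ℝ) 1 := by
    have h1 : ∀ᵐ x ∂(Measure.map U P), x ∈ Set.Icc (0:ℝ) 1 := by
      rw [hU]; exact ae_restrict_mem measurableSet_Icc
    exact (ae_map_iff hUae measurableSet_Icc).1 h1
  -- independence of the composed functions
  have hIndepUY1 : IndepFun U Y1 P := hindep.indep (show (0:Fin 3) ≠ 1 by decide)
  have hIndepUY2 : IndepFun U Y2 P := hindep.indep (show (0:Fin 3) ≠ 2 by decide)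
  have hIndep1 : IndepFun (φ ∘ U) (Ψ ∘ Y1) P := hIndepUY1.comp hφmeas hΨmeas
  have hIndep2 : IndepFun (φ' ∘ U) (Ψ ∘ Y2) P := hIndepUY2.comp hφ'meas hΨmeas
  -- the key pointwise bound
  have hpt : ∀ᵐ ω ∂P,
      ENNReal.ofReal
        ((⨆ t : Set.Icc (0:ℝ) 1,
          |if (t : ℝ) < U ω then U ω * Y1 ω (t / U ω)
            else (1 - U ω) * Y2 ω (((t : ℝ) - U ω) / (1 - U ω))|) ^ 2)
        ≤ φ (U ω) * Ψ (Y1 ω) + φ' (U ω) * Ψ (Y2 ω) := by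
    filter_upwards [hUmem] with ω hω
    have hU0 : 0 ≤ U ω := hω.1
    have hU1 : U ω ≤ 1 := hω.2
    set M1 : ℝ := ⨆ t : Set.Icc (0:ℝ) 1, |Y1 ω t| with hM1
    set M2 : ℝ := ⨆ t : Set.Icc (0:ℝ) 1, |Y2 ω t| with hM2
    obtain ⟨C1, hC1⟩ := cadlag_bdd (hpath1 ω)
    obtain ⟨C2, hC2⟩ := cadlag_bdd (hpath2 ω)
    have hbdd1 : BddAbove (Set.range fun t : Set.Icc (0:ℝ) 1 => |Y1 ω t|) :=
      ⟨C1, by rintro _ ⟨t, rfl⟩; exact hC1 t t.2⟩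
    have hbdd2 : BddAbove (Set.range fun t : Set.Icc (0:ℝ) 1 => |Y2 ω t|) :=
      ⟨C2, by rintro _ ⟨t, rfl⟩; exact hC2 t t.2⟩
    have hM1nn : 0 ≤ M1 := Real.iSup_nonneg fun t => abs_nonneg _
    have hM2nn : 0 ≤ M2 := Real.iSup_nonneg fun t => abs_nonneg _
    set a : ℝ := U ω * M1 with haa
    set b : ℝ := (1 - U ω) * M2 with hbb
    have ha0 : 0 ≤ a := mul_nonneg hU0 hM1nn
    have hb0 : 0 ≤ b := mul_nonneg (by linarith) hM2nn
    have hmax0 : 0 ≤ max a b := le_trans ha0 (le_max_left _ _)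
    have hZle : (⨆ t : Set.Icc (0:ℝ) 1,
        |if (t : ℝ) < U ω then U ω * Y1 ω (t / U ω)
          else (1 - U ω) * Y2 ω (((t : ℝ) - U ω) / (1 - U ω))|) ≤ max a b := by
      apply Real.iSup_le _ hmax0
      rintro ⟨t, ht⟩
      by_cases hlt : t < U ω
      · rw [if_pos hlt]
        have hU0' : 0 < U ω := lt_of_le_of_lt ht.1 hlt
        have hmem : t / U ω ∈ Set.Icc (0:ℝ) 1 :=
          ⟨div_nonneg ht.1 hU0, (div_le_one hU0').2 hlt.le⟩
        have h1 : |Y1 ω (t / U ω)| ≤ M1 := le_ciSup hbdd1 (⟨t / U ω, hmem⟩ : Set.Icc (0:ℝ) 1)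
        calc |U ω * Y1 ω (t / U ω)| = U ω * |Y1 ω (t / U ω)| := by
              rw [abs_mul, abs_of_nonneg hU0]
          _ ≤ a := mul_le_mul_of_nonneg_left h1 hU0
          _ ≤ max a b := le_max_left _ _
      · rw [if_neg hlt]
        by_cases hUeq : U ω = 1
        · have : (1 : ℝ) - U ω = 0 := by rw [hUeq]; ring
          rw [this]
          simpa using hmax0
        · have hU1' : U ω < 1 := lt_of_le_of_ne hU1 hUeq
          have h1U : (0:ℝ) < 1 - U ω := by linarith
          have hge : U ω ≤ t := not_lt.1 hlt
          have hmem : (t - U ω) / (1 - U ω) ∈ Set.Icc (0:ℝ) 1 :=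
            ⟨div_nonneg (by linarith) h1U.le, (div_le_one h1U).2 (by linarith [ht.2])⟩
          have h1 : |Y2 ω ((t - U ω) / (1 - U ω))| ≤ M2 :=
            le_ciSup hbdd2 (⟨(t - U ω) / (1 - U ω), hmem⟩ : Set.Icc (0:ℝ) 1)
          calc |(1 - U ω) * Y2 ω ((t - U ω) / (1 - U ω))|
              = (1 - U ω) * |Y2 ω ((t - U ω) / (1 - U ω))| := by
                rw [abs_mul, abs_of_nonneg h1U.le]
            _ ≤ b := mul_le_mul_of_nonneg_left h1 h1U.le
            _ ≤ max a b := le_max_right _ _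
    have hZnn : 0 ≤ (⨆ t : Set.Icc (0:ℝ) 1,
        |if (t : ℝ) < U ω then U ω * Y1 ω (t / U ω)
          else (1 - U ω) * Y2 ω (((t : ℝ) - U ω) / (1 - U ω))|) :=
      Real.iSup_nonneg fun t => abs_nonneg _
    have hsq : (⨆ t : Set.Icc (0:ℝ) 1,
        |if (t : ℝ) < U ω then U ω * Y1 ω (t / U ω)
          else (1 - U ω) * Y2 ω (((t : ℝ) - U ω) / (1 - U ω))|) ^ 2
        ≤ a ^ 2 + b ^ 2 := by
      have h1 := pow_le_pow_left₀ hZnn hZle 2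
      have h2 : (max a b) ^ 2 ≤ a ^ 2 + b ^ 2 := by
        rcases max_cases a b with ⟨h, _⟩ | ⟨h, _⟩ <;> rw [h] <;> nlinarith [sq_nonneg a, sq_nonneg b]
      linarith
    have hS1 : Ψ (Y1 ω) = ENNReal.ofReal (M1 ^ 2) := (cadlag_ofReal_sq (hpath1 ω)).symm
    have hS2 : Ψ (Y2 ω) = ENNReal.ofReal (M2 ^ 2) := (cadlag_ofReal_sq (hpath2 ω)).symm
    calc ENNReal.ofReal _ ≤ ENNReal.ofReal (a ^ 2 + b ^ 2) := ENNReal.ofReal_le_ofReal hsq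
      _ ≤ ENNReal.ofReal (a ^ 2) + ENNReal.ofReal (b ^ 2) := ENNReal.ofReal_add_le
      _ = φ (U ω) * Ψ (Y1 ω) + φ' (U ω) * Ψ (Y2 ω) := by
          rw [hS1, hS2, hφ, hφ']
          rw [haa, hbb, mul_pow, mul_pow,
            ENNReal.ofReal_mul (sq_nonneg _), ENNReal.ofReal_mul (sq_nonneg _)]
  -- integrate
  have hAae : AEMeasurable (φ ∘ U) P := hφmeas.comp_aemeasurable hUae
  have hBae : AEMeasurable (φ' ∘ U) P := hφ'meas.comp_aemeasurable hUae
  have hS1m : Measurable (Ψ ∘ Y1) := hΨmeas.comp hY1meas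
  have hS2m : Measurable (Ψ ∘ Y2) := hΨmeas.comp hY2meas
  -- compute ∫⁻ φ∘U and ∫⁻ φ'∘U
  have hIU : ∫⁻ ω, φ (U ω) ∂P = ENNReal.ofReal (1/3) := by
    rw [← lintegral_map' hφmeas.aemeasurable hUae, hU]
    have hInt : IntegrableOn (fun x : ℝ => x ^ 2) (Set.Icc 0 1) volume :=
      (continuous_pow 2).integrableOn_Icc
    rw [← ofReal_integral_eq_lintegral_ofReal hInt
      (Eventually.of_forall fun x => sq_nonneg x)]
    congr 1
    rw [MeasureTheory.integral_Icc_eq_integral_Ioc,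
      ← intervalIntegral.integral_of_le (zero_le_one (α := ℝ)), integral_pow]
    norm_num
  have hIV : ∫⁻ ω, φ' (U ω) ∂P = ENNReal.ofReal (1/3) := by
    rw [← lintegral_map' hφ'meas.aemeasurable hUae, hU]
    have hInt : IntegrableOn (fun x : ℝ => (1 - x) ^ 2) (Set.Icc 0 1) volume :=
      ((continuous_const.sub continuous_id).pow 2).integrableOn_Icc
    rw [← ofReal_integral_eq_lintegral_ofReal hInt
      (Eventually.of_forall fun x => sq_nonneg _)]
    congr 1
    rw [MeasureTheory.integral_Icc_eq_integral_Ioc,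
      ← intervalIntegral.integral_of_le (zero_le_one (α := ℝ))]
    have := intervalIntegral.integral_comp_sub_left (a := (0:ℝ)) (b := 1)
      (fun x : ℝ => x ^ 2) 1
    rw [this]
    norm_num [integral_pow]
  -- identically distributed
  have hident' : ∫⁻ ω, (Ψ ∘ Y2) ω ∂P = ∫⁻ ω, (Ψ ∘ Y1) ω ∂P :=
    ((hident.comp hΨmeas).lintegral_eq).symm
  -- RHS rewriting
  have hRHS : ∫⁻ ω, ENNReal.ofReal ((⨆ t : Set.Icc (0:ℝ) 1, |Y1 ω t|) ^ 2) ∂P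
      = ∫⁻ ω, (Ψ ∘ Y1) ω ∂P :=
    lintegral_congr fun ω => cadlag_ofReal_sq (hpath1 ω)
  calc (∫⁻ ω, ENNReal.ofReal
        ((⨆ t : Set.Icc (0:ℝ) 1,
          |if (t : ℝ) < U ω then U ω * Y1 ω (t / U ω)
            else (1 - U ω) * Y2 ω (((t : ℝ) - U ω) / (1 - U ω))|) ^ 2) ∂P)
      ≤ ∫⁻ ω, (φ (U ω) * Ψ (Y1 ω) + φ' (U ω) * Ψ (Y2 ω)) ∂P := lintegral_mono_ae hpt
    _ = (∫⁻ ω, (φ ∘ U) ω * (Ψ ∘ Y1) ω ∂P) + ∫⁻ ω, (φ' ∘ U) ω * (Ψ ∘ Y2) ω ∂P :=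
        lintegral_add_left' (hAae.mul hS1m.aemeasurable) _
    _ = (∫⁻ ω, (φ ∘ U) ω ∂P) * (∫⁻ ω, (Ψ ∘ Y1) ω ∂P)
        + (∫⁻ ω, (φ' ∘ U) ω ∂P) * ∫⁻ ω, (Ψ ∘ Y2) ω ∂P := by
        rw [lintegral_mul_eq_lintegral_mul_lintegral_of_indepFun'' hAae hS1m.aemeasurable hIndep1,
          lintegral_mul_eq_lintegral_mul_lintegral_of_indepFun'' hBae hS2m.aemeasurable hIndep2]
    _ = ENNReal.ofReal (2/3) * ∫⁻ ω, (Ψ ∘ Y1) ω ∂P := by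
        rw [hident']
        show (∫⁻ ω, φ (U ω) ∂P) * (∫⁻ ω, (Ψ ∘ Y1) ω ∂P)
          + (∫⁻ ω, φ' (U ω) ∂P) * (∫⁻ ω, (Ψ ∘ Y1) ω ∂P) = _
        rw [hIU, hIV, ← add_mul, ← ENNReal.ofReal_add (by norm_num) (by norm_num)]
        norm_num
    _ = ENNReal.ofReal (2/3)
        * ∫⁻ ω, ENNReal.ofReal ((⨆ t : Set.Icc (0:ℝ) 1, |Y1 ω t|) ^ 2) ∂P := by rw [hRHS]

end
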